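/- Let Q ∈ 𝒬_2^m be a binary form of degree m ≥ 3 with Δ(Q) ≠ 0 and associated form 𝐐 ∈ 𝒬_2^{2(m-2)}. Then Cat(𝐐) ≠ 0, where Cat denotes the catalecticant of a binary form of even degree 2(m−2). -/

import Mathlib

open MvPolynomial

set_option synthInstance.maxHeartbeats 400000
set_option maxHeartbeats 1000000

/-- The Jacobian ideal `J(Q)`, generated by the first-order partial derivatives of `Q`. -/
noncomputable def jacobianIdeal {n : ℕ} (Q : MvPolynomial (Fin n) ℂ) :
    Ideal (MvPolynomial (Fin n) ℂ) :=
  Ideal.span (Set.range fun i => pderiv i Q)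

/-- A form `Q` is non-degenerate (`Δ(Q) ≠ 0`): its partial derivatives have no common
zero away from the origin. -/
def Nondegenerate {n : ℕ} (Q : MvPolynomial (Fin n) ℂ) : Prop :=
  ∀ z : Fin n → ℂ, (∀ i, eval z (pderiv i Q) = 0) → z = 0

/-- The Hessian `Hess(Q) = det(∂²Q/∂zᵢ∂zⱼ)`. -/
noncomputable def hess {n : ℕ} (Q : MvPolynomial (Fin n) ℂ) : MvPolynomial (Fin n) ℂ :=
  (Matrix.of fun i j => pderiv i (pderiv j Q)).det

/-- Apply a linear functional `ρ : A → ℂ` coefficientwise to a polynomial with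
coefficients in `A`. -/
noncomputable def coeffMap {n : ℕ} {A : Type*} [CommRing A]
    (ρ : A → ℂ) (p : MvPolynomial (Fin n) A) : MvPolynomial (Fin n) ℂ :=
  ∑ d ∈ p.support, monomial d (ρ (p.coeff d))

/-- `A` is the associated form of `Q ∈ 𝒬_n^m`: there is a linear functional `ω` on the
Milnor algebra `M(Q) = ℂ[z]/J(Q)` sending the class of `Hess(Q)` to `1` and vanishing on
classes of forms of degree `< n(m-2)`, such that
`A(z) = ω((z_1 e_1 + ⋯ + z_n e_n)^{n(m-2)})`, where `e_i` is the class of `z_i`. -/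
def IsAssocForm (n m : ℕ) (Q A : MvPolynomial (Fin n) ℂ) : Prop :=
  ∃ ω : (MvPolynomial (Fin n) ℂ ⧸ jacobianIdeal Q) →ₗ[ℂ] ℂ,
    ω (Ideal.Quotient.mk (jacobianIdeal Q) (hess Q)) = 1 ∧
    (∀ j : ℕ, j < n * (m - 2) → ∀ p : MvPolynomial (Fin n) ℂ, p.IsHomogeneous j →
      ω (Ideal.Quotient.mk (jacobianIdeal Q) p) = 0) ∧
    A = coeffMap (fun a => ω a)
      ((∑ i, MvPolynomial.C (Ideal.Quotient.mk (jacobianIdeal Q) (X i)) * X i)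
        ^ (n * (m - 2)))

/-- The catalecticant of a binary form of even degree `2N`:
writing `R = Σ_j C(2N,j) a_j z₁^{2N-j} z₂^j`, it is the determinant of the Hankel
matrix `(a_{i+j})_{0 ≤ i,j ≤ N}`. -/
noncomputable def catalecticant (N : ℕ) (R : MvPolynomial (Fin 2) ℂ) : ℂ :=
  (Matrix.of fun i j : Fin (N + 1) =>
    R.coeff (Finsupp.single 0 (2 * N - (i.1 + j.1)) + Finsupp.single 1 (i.1 + j.1)) /
      (Nat.choose (2 * N) (i.1 + j.1) : ℂ)).det

/-!
Put `N = m - 2`, `f = ∂Q/∂z₁`, `g = ∂Q/∂z₂` (forms of degree `N + 1` without common zero) and let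
`L` be `ω` precomposed with `ℂ[z] → M(Q)`, so that `L` kills the ideal `(f, g)` and `L(Hess Q) = 1`.
The coefficients of `𝐐` are `binom(2N, s) · L(z₁^{2N-s} z₂^s)`, so the catalecticant matrix is the
Gram matrix of `(v, w) ↦ L(v w)` on forms of degree `N`, and it suffices that this pairing is
nondegenerate.

Dehomogenizing turns `f, g` into coprime polynomials, one of them of degree `N + 1`; hence
`f a + g b = 0` with `deg a = deg b ≤ N` forces `a = b = 0`. Writing `P_d` for the forms of
degree `d`, it follows that `f·P_{N-1} + g·P_{N-1}` has dimension `2N`, a hyperplane of `P_{2N}`;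
since `L` kills it but not `Hess Q`, it is the whole kernel of `L` on `P_{2N}`. So if
`L(v·P_N) = 0`, then `v·P_N` lies in `(f, g)`, and cancelling `z₁` and `z₂` one degree at a time
(using again the absence of syzygies of low degree) yields `v ∈ (f, g)` in degree `N < N + 1`,
i.e. `v = 0`.
-/

open scoped Polynomial

lemma MvPolynomial.IsHomogeneous.of_X_mul {σ R : Type*} [CommSemiring R] {p : MvPolynomial σ R}
    {i : σ} {n : ℕ} (h : (X i * p).IsHomogeneous n) : p.IsHomogeneous (n - 1) := by
  intro d hd
  have := h (d := Finsupp.single i 1 + d) (by rwa [coeff_X_mul])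
  rw [map_add, Finsupp.weight_single, Pi.one_apply, smul_eq_mul, mul_one] at this
  omega

lemma Polynomial.mem_degreeLT_succ_iff {R : Type*} [Semiring R] {p : R[X]} {n : ℕ} :
    p ∈ degreeLT R (n + 1) ↔ p.natDegree ≤ n := by
  rw [degreeLT_succ_eq_degreeLE, mem_degreeLE, natDegree_le_iff_degree_le]

lemma coeff_sum_C_mul_X_pow {R : Type*} [CommRing R] (e : Fin 2 → R) (a b : ℕ) :
    coeff (Finsupp.single 0 a + Finsupp.single 1 b) ((∑ i, C (e i) * X i) ^ (a + b)) =
      ((a + b).choose a : R) * (e 0 ^ a * e 1 ^ b) := by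
  set d : Fin 2 →₀ ℕ := Finsupp.single 0 a + Finsupp.single 1 b
  have hd : d.sum (fun _ m => m) = a + b := by
    simp [d, Finsupp.sum_of_support_subset d (Finset.subset_univ d.support)]
  simp_rw [← smul_eq_C_mul]
  rw [coeff_linearCombination_X_pow_of_fintype, if_pos hd,
    Finsupp.multinomial_eq_of_support_subset (Finset.subset_univ d.support), Finset.univ_fin2,
    Nat.binomial_eq_choose Fin.zero_ne_one]
  simp [d, Finsupp.prod_fintype]

namespace BinaryForm

variable {K : Type*} [Field K]

noncomputable def dehomogenize : MvPolynomial (Fin 2) K →ₐ[K] K[X] :=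
  aeval ![Polynomial.X, 1]

lemma natDegree_dehomogenize_le {q : MvPolynomial (Fin 2) K} {n : ℕ}
    (hq : q.IsHomogeneous n) : (dehomogenize q).natDegree ≤ n := by
  rw [q.as_sum, map_sum]
  refine Polynomial.natDegree_sum_le_of_forall_le _ _ fun d hd => ?_
  have hdeg : d 0 + d 1 = n := by
    simpa [Finsupp.weight_apply, Finsupp.sum_fintype, Fin.sum_univ_two] using
      hq (mem_support_iff.mp hd)
  simp only [dehomogenize, aeval_monomial, Finsupp.prod_fintype _ _ (fun _ => pow_zero _),
    Fin.prod_univ_two]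
  simp only [Matrix.cons_val_zero, Matrix.cons_val_one, one_pow, mul_one, Polynomial.algebraMap_eq]
  exact (Polynomial.natDegree_C_mul_X_pow_le _ _).trans (by omega)

lemma eval_eq_eval_dehomogenize (q : MvPolynomial (Fin 2) K) (r : K) :
    eval ![r, 1] q = (dehomogenize q).eval r := by
  have h : (fun i => Polynomial.aeval r ((![Polynomial.X, 1] : Fin 2 → K[X]) i)) = ![r, 1] := by
    ext i; fin_cases i <;> simp
  rw [← coe_aeval_eq_eval, ← Polynomial.coe_aeval_eq_eval, dehomogenize, ← AlgHom.comp_apply,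
    comp_aeval, h]
  rfl

lemma eval_one_zero_eq_coeff {q : MvPolynomial (Fin 2) K} {n : ℕ} (hq : q.IsHomogeneous n) :
    eval ![1, 0] q = (dehomogenize q).coeff n := by
  conv_lhs => rw [← Polynomial.homogenize_eq_of_isHomogeneous hq rfl]
  simp only [Polynomial.homogenize, map_sum, eval_monomial]
  rw [Finset.sum_eq_single_of_mem (n, 0) (by simp)]
  · simp [dehomogenize]
  · rintro ⟨a, b⟩ hab hne
    have hb : b ≠ 0 := by
      rintro rfl
      simp_all
    simp [hb]

lemma eq_zero_of_dehomogenize_eq_zero {q : MvPolynomial (Fin 2) K} {n : ℕ}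
    (hq : q.IsHomogeneous n) (h : dehomogenize q = 0) : q = 0 := by
  rw [← Polynomial.homogenize_eq_of_isHomogeneous hq h, Polynomial.homogenize_zero]

noncomputable def homogeneousSubmoduleEquivDegreeLT (n : ℕ) :
    homogeneousSubmodule (Fin 2) K n ≃ₗ[K] Polynomial.degreeLT K (n + 1) where
  toFun q :=
    ⟨dehomogenize q.1, Polynomial.mem_degreeLT_succ_iff.2 (natDegree_dehomogenize_le q.2)⟩
  map_add' p q := by ext1; simp
  map_smul' c q := by ext1; simp
  invFun p := ⟨p.1.homogenize n, Polynomial.isHomogeneous_homogenize _⟩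
  left_inv q := Subtype.ext (Polynomial.homogenize_eq_of_isHomogeneous q.2 rfl)
  right_inv p := Subtype.ext <|
    Polynomial.aeval_homogenize_X_one _ (Polynomial.mem_degreeLT_succ_iff.1 p.2)

instance (n : ℕ) : FiniteDimensional K (homogeneousSubmodule (Fin 2) K n) :=
  (homogeneousSubmoduleEquivDegreeLT n).symm.finiteDimensional

lemma finrank_homogeneousSubmodule (n : ℕ) :
    Module.finrank K (homogeneousSubmodule (Fin 2) K n) = n + 1 := by
  rw [(homogeneousSubmoduleEquivDegreeLT n).finrank_eq, (Polynomial.degreeLTEquiv K _).finrank_eq,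
    Module.finrank_fin_fun]

lemma exists_eq_X_mul_of_X_mul_eq {a b : MvPolynomial (Fin 2) K} {k : ℕ}
    (ha : a.IsHomogeneous k) (h : X 1 * a = X 0 * b) :
    ∃ c, c.IsHomogeneous (k - 1) ∧ a = X 0 * c ∧ b = X 1 * c := by
  obtain ⟨c, rfl⟩ : X 0 ∣ a :=
    (X_prime.dvd_or_dvd ⟨b, h⟩).resolve_left (by rw [X_dvd_X]; decide)
  exact ⟨c, ha.of_X_mul, rfl, mul_left_cancel₀ (X_ne_zero 0) (by rw [← h]; ring)⟩

noncomputable def mulAddMulSpan (f g : MvPolynomial (Fin 2) K) (e : ℕ) :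
    Submodule K (MvPolynomial (Fin 2) K) :=
  LinearMap.range
    (((LinearMap.mulLeft K f).comp (homogeneousSubmodule (Fin 2) K e).subtype).coprod
      ((LinearMap.mulLeft K g).comp (homogeneousSubmodule (Fin 2) K e).subtype))

lemma mem_mulAddMulSpan {f g u : MvPolynomial (Fin 2) K} {e : ℕ} :
    u ∈ mulAddMulSpan f g e ↔
      ∃ a b, a.IsHomogeneous e ∧ b.IsHomogeneous e ∧ f * a + g * b = u := by
  simp [mulAddMulSpan, mem_homogeneousSubmodule]

section AlgClosed

variable [IsAlgClosed K] {N k : ℕ} {f g a b : MvPolynomial (Fin 2) K}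

lemma isCoprime_dehomogenize (hcop : ∀ z, eval z f = 0 → eval z g = 0 → z = 0) :
    IsCoprime (dehomogenize f) (dehomogenize g) := by
  rw [Polynomial.isCoprime_iff_aeval_ne_zero_of_isAlgClosed K K]
  intro r
  by_contra! h
  simp only [Polynomial.coe_aeval_eq_eval, ← eval_eq_eval_dehomogenize] at h
  simpa using congrFun (hcop _ h.1 h.2) 1

lemma eq_zero_of_mul_add_mul_eq_zero_of_eval_ne_zero (hf : f.IsHomogeneous (N + 1))
    (hf₁₀ : eval ![1, 0] f ≠ 0) (hcop : ∀ z, eval z f = 0 → eval z g = 0 → z = 0)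
    (hk : k ≤ N) (hb : b.IsHomogeneous k) (h : f * a + g * b = 0) : a = 0 ∧ b = 0 := by
  have hdeg : (dehomogenize f).natDegree = N + 1 :=
    (natDegree_dehomogenize_le hf).antisymm
      (Polynomial.le_natDegree_of_ne_zero (by rwa [← eval_one_zero_eq_coeff hf]))
  have h' : dehomogenize f * dehomogenize a + dehomogenize g * dehomogenize b = 0 := by
    simpa using congrArg dehomogenize h
  have hdvd : dehomogenize f ∣ dehomogenize b :=
    (isCoprime_dehomogenize hcop).dvd_of_dvd_mul_left ⟨-dehomogenize a, by linear_combination h'⟩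
  have hb₀ : b = 0 := eq_zero_of_dehomogenize_eq_zero hb <|
    Polynomial.eq_zero_of_dvd_of_natDegree_lt hdvd (by linarith [natDegree_dehomogenize_le hb])
  have hf₀ : f ≠ 0 := by
    rintro rfl
    simp at hf₁₀
  exact ⟨by simpa [hb₀, hf₀] using h, hb₀⟩

variable (hf : f.IsHomogeneous (N + 1)) (hg : g.IsHomogeneous (N + 1))
  (hcop : ∀ z, eval z f = 0 → eval z g = 0 → z = 0)
include hf hg hcop

lemma eq_zero_of_mul_add_mul_eq_zero (hk : k ≤ N) (ha : a.IsHomogeneous k)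
    (hb : b.IsHomogeneous k) (h : f * a + g * b = 0) : a = 0 ∧ b = 0 := by
  by_cases hf₁₀ : eval ![1, 0] f = 0
  · have hg₁₀ : eval ![1, 0] g ≠ 0 := fun hg₁₀ => by simpa using congrFun (hcop _ hf₁₀ hg₁₀) 0
    refine (eq_zero_of_mul_add_mul_eq_zero_of_eval_ne_zero hg hg₁₀ (fun z h₁ h₂ => hcop z h₂ h₁)
      hk ha ?_).symm
    rwa [add_comm]
  · exact eq_zero_of_mul_add_mul_eq_zero_of_eval_ne_zero hf hf₁₀ hcop hk hb h

lemma mem_mulAddMulSpan_of_X_mul_mem (hk : k + 1 ≤ N) {u : MvPolynomial (Fin 2) K}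
    (h₀ : X 0 * u ∈ mulAddMulSpan f g k) (h₁ : X 1 * u ∈ mulAddMulSpan f g k) :
    u ∈ mulAddMulSpan f g (k - 1) := by
  obtain ⟨a₀, b₀, ha₀, hb₀, e₀⟩ := mem_mulAddMulSpan.1 h₀
  obtain ⟨a₁, b₁, ha₁, hb₁, e₁⟩ := mem_mulAddMulSpan.1 h₁
  have hX₀ := isHomogeneous_X K (0 : Fin 2)
  have hX₁ := isHomogeneous_X K (1 : Fin 2)
  -- `z₂ (z₁ u) = z₁ (z₂ u)` is a syzygy of `f, g` in degree `k + 1 ≤ N`, hence a trivial one.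
  obtain ⟨ha, hb⟩ := eq_zero_of_mul_add_mul_eq_zero hf hg hcop (by omega : 1 + k ≤ N)
    ((hX₁.mul ha₀).sub (hX₀.mul ha₁)) ((hX₁.mul hb₀).sub (hX₀.mul hb₁))
    (by linear_combination X 1 * e₀ - X 0 * e₁)
  obtain ⟨α, hα, rfl, rfl⟩ := exists_eq_X_mul_of_X_mul_eq ha₀ (sub_eq_zero.1 ha)
  obtain ⟨β, hβ, rfl, rfl⟩ := exists_eq_X_mul_of_X_mul_eq hb₀ (sub_eq_zero.1 hb)
  exact mem_mulAddMulSpan.2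
    ⟨α, β, hα, hβ, mul_left_cancel₀ (X_ne_zero 0) (by linear_combination e₀)⟩

lemma eq_zero_of_forall_mul_mem_mulAddMulSpan {v : MvPolynomial (Fin 2) K}
    (hv : v.IsHomogeneous N)
    (h : ∀ w, w.IsHomogeneous N → v * w ∈ mulAddMulSpan f g (N - 1)) : v = 0 := by
  have hdesc : ∀ d ≤ N, ∀ w, w.IsHomogeneous d → v * w ∈ mulAddMulSpan f g (d - 1) := by
    intro d hd
    induction hd using Nat.decreasingInduction with
    | self => exact h
    | of_succ d hd ih =>
      intro w hw
      have hXw (i : Fin 2) : v * (X i * w) ∈ mulAddMulSpan f g d := by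
        simpa using ih _ (by simpa [add_comm] using (isHomogeneous_X K i).mul hw)
      exact mem_mulAddMulSpan_of_X_mul_mem hf hg hcop hd (by simpa [mul_left_comm] using hXw 0)
        (by simpa [mul_left_comm] using hXw 1)
  -- At `d = 0` the truncated `d - 1` is `0`: `v` itself is a form `f a + g b` of degree `N + 1`.
  obtain ⟨a, b, ha, hb, rfl⟩ :=
    mem_mulAddMulSpan.1 (by simpa using hdesc 0 N.zero_le 1 (isHomogeneous_one _ _))
  by_contra hv₀
  have := hv.inj_right (by simpa using (hf.mul ha).add (hg.mul hb)) hv₀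
  omega

lemma finrank_mulAddMulSpan (hk : k ≤ N) :
    Module.finrank K (mulAddMulSpan f g k) = 2 * (k + 1) := by
  rw [mulAddMulSpan, LinearMap.finrank_range_of_inj, Module.finrank_prod,
    finrank_homogeneousSubmodule, two_mul]
  rw [← LinearMap.ker_eq_bot, LinearMap.ker_eq_bot']
  rintro ⟨⟨a, ha⟩, ⟨b, hb⟩⟩ h
  obtain ⟨rfl, rfl⟩ := eq_zero_of_mul_add_mul_eq_zero hf hg hcop hk ha hb (by simpa using h)
  rfl

section Pairing

variable (hN : 1 ≤ N) {L : MvPolynomial (Fin 2) K →ₗ[K] K}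
  (hLf : ∀ p, L (f * p) = 0) (hLg : ∀ p, L (g * p) = 0)
  {h : MvPolynomial (Fin 2) K} (hh : h.IsHomogeneous (2 * N)) (hLh : L h ≠ 0)
include hN hLf hLg hh hLh

lemma mem_mulAddMulSpan_of_apply_eq_zero {u : MvPolynomial (Fin 2) K}
    (hu : u.IsHomogeneous (2 * N)) (hLu : L u = 0) : u ∈ mulAddMulSpan f g (N - 1) := by
  set P := homogeneousSubmodule (Fin 2) K (2 * N)
  have hle : mulAddMulSpan f g (N - 1) ≤ P ⊓ LinearMap.ker L := by
    intro x hx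
    obtain ⟨a, b, ha, hb, rfl⟩ := mem_mulAddMulSpan.1 hx
    refine ⟨(mem_homogeneousSubmodule _ _).2 ?_, by simp [hLf, hLg]⟩
    convert (hf.mul ha).add (hg.mul hb) using 1
    omega
  have hlt : P ⊓ LinearMap.ker L < P :=
    inf_lt_left.2 fun hP => hLh (hP ((mem_homogeneousSubmodule _ _).2 hh))
  have hrank := Submodule.finrank_lt_finrank_of_lt hlt
  rw [finrank_homogeneousSubmodule] at hrank
  have heq := Submodule.eq_of_le_of_finrank_le hle
    (by rw [finrank_mulAddMulSpan hf hg hcop (N.sub_le 1)]; omega)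
  exact heq ▸ ⟨(mem_homogeneousSubmodule _ _).2 hu, hLu⟩

lemma eq_zero_of_forall_apply_mul_eq_zero {v : MvPolynomial (Fin 2) K} (hv : v.IsHomogeneous N)
    (hvw : ∀ w, w.IsHomogeneous N → L (v * w) = 0) : v = 0 :=
  eq_zero_of_forall_mul_mem_mulAddMulSpan hf hg hcop hv fun w hw =>
    mem_mulAddMulSpan_of_apply_eq_zero hf hg hcop hN hLf hLg hh hLh
      (by simpa [two_mul] using hv.mul hw) (hvw w hw)

end Pairing

end AlgClosed

noncomputable def hankelMatrix (L : MvPolynomial (Fin 2) K →ₗ[K] K) (N : ℕ) :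
    Matrix (Fin (N + 1)) (Fin (N + 1)) K :=
  Matrix.of fun i j =>
    L (monomial (Finsupp.single 0 (2 * N - (i.1 + j.1)) + Finsupp.single 1 (i.1 + j.1)) 1)

lemma det_hankelMatrix_ne_zero {N : ℕ} {L : MvPolynomial (Fin 2) K →ₗ[K] K}
    (hL : ∀ v, v.IsHomogeneous N → (∀ w, w.IsHomogeneous N → L (v * w) = 0) → v = 0) :
    (hankelMatrix L N).det ≠ 0 := by
  set P := homogeneousSubmodule (Fin 2) K N
  let exps (j : Fin (N + 1)) : Fin 2 →₀ ℕ := Finsupp.single 0 (N - j.1) + Finsupp.single 1 j.1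
  let e (j : Fin (N + 1)) : P :=
    ⟨monomial (exps j) 1, isHomogeneous_monomial _ <| by
      simp only [exps, map_add, Finsupp.degree_single]
      omega⟩
  have hexps : Function.Injective exps := fun i j hij =>
    Fin.ext (by simpa [exps] using congrArg (· 1) hij)
  have he : LinearIndependent K e :=
    .of_comp P.subtype ((basisMonomials (Fin 2) K).linearIndependent.comp _ hexps)
  let b := basisOfLinearIndependentOfCardEqFinrank he (by simp [P, finrank_homogeneousSubmodule])
  let B : LinearMap.BilinForm K P := ((LinearMap.mul K _).compl₁₂ P.subtype P.subtype).compr₂ L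
  have hB : B.Nondegenerate := by
    refine ⟨fun v hv => Subtype.ext (hL v v.2 fun w hw => hv ⟨w, hw⟩), fun w hw => ?_⟩
    exact Subtype.ext (hL w w.2 fun v hv => by simpa [B, mul_comm] using hw ⟨v, hv⟩)
  convert (LinearMap.BilinForm.nondegenerate_iff_det_ne_zero b).1 hB using 2
  ext i j
  simp only [hankelMatrix, LinearMap.BilinForm.toMatrix_apply, b, B, e,
    coe_basisOfLinearIndependentOfCardEqFinrank, LinearMap.compr₂_apply, LinearMap.compl₁₂_apply,
    LinearMap.mul_apply', Submodule.subtype_apply, monomial_mul, mul_one, Matrix.of_apply]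
  refine congrArg (fun d => L (monomial d 1)) ?_
  ext k
  fin_cases k <;> simp [exps]
  omega

end BinaryForm

lemma coeff_coeffMap {n : ℕ} {R : Type*} [CommRing R] {ρ : R → ℂ} (hρ : ρ 0 = 0)
    (p : MvPolynomial (Fin n) R) (d : Fin n →₀ ℕ) :
    (coeffMap ρ p).coeff d = ρ (p.coeff d) := by
  simp only [coeffMap, coeff_sum, coeff_monomial, Finset.sum_ite_eq', mem_support_iff]
  split_ifs with h
  · rfl
  · rw [notMem_support_iff.1 h, hρ]

lemma isHomogeneous_hess {n m : ℕ} {Q : MvPolynomial (Fin n) ℂ}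
    (hQ : Q.IsHomogeneous m) : (hess Q).IsHomogeneous (n * (m - 2)) := by
  rw [hess, Matrix.det_apply]
  refine IsHomogeneous.sum _ _ _ fun σ _ => ?_
  have hprod := IsHomogeneous.prod Finset.univ _ (fun _ => m - 2)
    fun i _ => (hQ.pderiv (i := i)).pderiv (i := σ i)
  have hsign := (isHomogeneous_C (Fin n) ((Equiv.Perm.sign σ : ℤ) : ℂ)).mul hprod
  rw [map_intCast] at hsign
  rw [Units.smul_def, zsmul_eq_mul]
  simpa [mul_comm, Nat.sub_sub] using hsign

lemma catalecticant_coeffMap_eq_det (I : Ideal (MvPolynomial (Fin 2) ℂ))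
    (ω : (MvPolynomial (Fin 2) ℂ ⧸ I) →ₗ[ℂ] ℂ) (N : ℕ) :
    catalecticant N (coeffMap (fun x => ω x)
      ((∑ i, C (Ideal.Quotient.mk I (X i)) * X i) ^ (2 * N))) =
    (BinaryForm.hankelMatrix (ω ∘ₗ (Ideal.Quotient.mkₐ ℂ I).toLinearMap) N).det := by
  rw [catalecticant, BinaryForm.hankelMatrix]
  congr 1
  ext i j
  have hij : i.1 + j.1 ≤ 2 * N := by omega
  have hcoeff := coeff_sum_C_mul_X_pow (fun i => Ideal.Quotient.mk I (X i))
    (2 * N - (i.1 + j.1)) (i.1 + j.1)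
  rw [Nat.sub_add_cancel hij, Nat.choose_symm hij] at hcoeff
  have hchoose : ((2 * N).choose (i.1 + j.1) : ℂ) ≠ 0 := by
    exact_mod_cast (Nat.choose_pos hij).ne'
  rw [Matrix.of_apply, Matrix.of_apply, LinearMap.comp_apply, AlgHom.toLinearMap_apply,
    Ideal.Quotient.mkₐ_eq_mk, coeff_coeffMap (map_zero ω), hcoeff, ← nsmul_eq_mul,
    map_nsmul, nsmul_eq_mul, mul_div_cancel_left₀ _ hchoose, ← map_pow, ← map_pow, ← map_mul,
    X_pow_eq_monomial, X_pow_eq_monomial, monomial_mul, one_mul]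

/-- For every non-degenerate binary form `Q` of degree `m ≥ 3`, the
catalecticant of its associated form `𝐐 ∈ 𝒬_2^{2(m-2)}` does not vanish. -/
theorem catalecticant_assocForm_ne_zero
    (m : ℕ) (hm : 3 ≤ m) (Q A : MvPolynomial (Fin 2) ℂ)
    (hQ : Q.IsHomogeneous m) (hnd : Nondegenerate Q)
    (hA : IsAssocForm 2 m Q A) :
    catalecticant (m - 2) A ≠ 0 := by
  obtain ⟨ω, hω_hess, -, rfl⟩ := hA
  set N := m - 2
  set L := ω ∘ₗ (Ideal.Quotient.mkₐ ℂ (jacobianIdeal Q)).toLinearMap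
  have hpderiv (i : Fin 2) : (pderiv i Q).IsHomogeneous (N + 1) := by
    simpa [show m - 1 = N + 1 by omega] using hQ.pderiv (i := i)
  have hcop (z : Fin 2 → ℂ) (h₀ : eval z (pderiv 0 Q) = 0) (h₁ : eval z (pderiv 1 Q) = 0) :
      z = 0 :=
    hnd z (Fin.forall_fin_two.2 ⟨h₀, h₁⟩)
  have hL (i : Fin 2) (p : MvPolynomial (Fin 2) ℂ) : L (pderiv i Q * p) = 0 := by
    have hmem : pderiv i Q * p ∈ jacobianIdeal Q :=
      Ideal.mul_mem_right p _ (Ideal.subset_span ⟨i, rfl⟩)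
    simp only [L, LinearMap.comp_apply, AlgHom.toLinearMap_apply, Ideal.Quotient.mkₐ_eq_mk,
      Ideal.Quotient.eq_zero_iff_mem.2 hmem, map_zero]
  have hL_hess : L (hess Q) ≠ 0 := by simp [L, hω_hess]
  rw [catalecticant_coeffMap_eq_det]
  exact BinaryForm.det_hankelMatrix_ne_zero fun v hv =>
    BinaryForm.eq_zero_of_forall_apply_mul_eq_zero (hpderiv 0) (hpderiv 1) hcop (by omega)
      (hL 0) (hL 1) (isHomogeneous_hess hQ) hL_hess hv
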